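/- arXiv:1203.6344 — 3 statements merged into one kernel-verified Lean document; each statement's English description precedes it below -/
import Mathlib

section
/- For all n ≥ 0 and k ≥ 1, p̄_k(n) ≥ p̄_{k+1}(n), i.e., the number of lower k-run overpartitions of n is at least the number of lower (k+1)-run overpartitions of n. -/
open scoped BigOperators
open Real

/-- An overpartition: a multiset of (non-overlined) positive parts together with a
finite set of overlined part sizes (the last occurrence of a part size may be overlined). -/
structure Overpartition where
  parts : Multiset ℕ
  overlined : Finset ℕ
  parts_pos : ∀ p ∈ parts, 0 < p
  over_pos : ∀ p ∈ overlined, 0 < p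

/-- The size (sum of all parts) of an overpartition. -/
def Overpartition.size (μ : Overpartition) : ℕ := μ.parts.sum + ∑ p ∈ μ.overlined, p

/-- The number of parts of an overpartition. -/
def Overpartition.numParts (μ : Overpartition) : ℕ := Multiset.card μ.parts + μ.overlined.card

/-- Lower `k`-run condition: every overlined part lies in a run of exactly `k` consecutive
overlined parts `j+1, …, j+k`, with no part of size `j` (overlined or not) and no overlined
part of size `j+k+1`. -/
def IsLowerKRun (k : ℕ) (μ : Overpartition) : Prop :=
  ∀ m ∈ μ.overlined, ∃ j : ℕ, j + 1 ≤ m ∧ m ≤ j + k ∧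
    (∀ i : ℕ, j + 1 ≤ i → i ≤ j + k → i ∈ μ.overlined) ∧
    j ∉ μ.parts ∧ j ∉ μ.overlined ∧ j + k + 1 ∉ μ.overlined

/-- Upper `k`-run condition: every overlined part lies in a run of overlined parts
`j+1, …, j+k`, with no overlined part of size `j` and no part of any kind of size `j+k+1`. -/
def IsUpperKRun (k : ℕ) (μ : Overpartition) : Prop :=
  ∀ m ∈ μ.overlined, ∃ j : ℕ, j + 1 ≤ m ∧ m ≤ j + k ∧
    (∀ i : ℕ, j + 1 ≤ i → i ≤ j + k → i ∈ μ.overlined) ∧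
    j ∉ μ.overlined ∧ j + k + 1 ∉ μ.parts ∧ j + k + 1 ∉ μ.overlined

/-- `p̄ₖ(n)`, the number of lower `k`-run overpartitions of `n`. -/
noncomputable def lowerKRunCount (k n : ℕ) : ℕ :=
  Nat.card {μ : Overpartition // μ.size = n ∧ IsLowerKRun k μ}

/-- The number of upper `k`-run overpartitions of `n`. -/
noncomputable def upperKRunCount (k n : ℕ) : ℕ :=
  Nat.card {μ : Overpartition // μ.size = n ∧ IsUpperKRun k μ}

/-- `p̄ₖ(ℓ,n)`, the number of upper `k`-run overpartitions of `n` with exactly `ℓ` parts. -/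
noncomputable def upperKRunCount2 (k l n : ℕ) : ℕ :=
  Nat.card {μ : Overpartition // μ.size = n ∧ μ.numParts = l ∧ IsUpperKRun k μ}

/-- The one-variable generating function `Ḡₖ(q)` of lower `k`-run overpartitions. -/
noncomputable def Gbar (k : ℕ) (q : ℂ) : ℂ := ∑' n : ℕ, (lowerKRunCount k n : ℂ) * q ^ n

/-- The two-variable generating function `Ḡₖ(x;q)` of `k`-run overpartitions. -/
noncomputable def Gbar2 (k : ℕ) (x q : ℂ) : ℂ :=
  ∑' p : ℕ × ℕ, (upperKRunCount2 k p.1 p.2 : ℂ) * x ^ p.1 * q ^ p.2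

/-- The finite q-Pochhammer symbol `(a;q)ₙ`. -/
def qPoch (a q : ℂ) (n : ℕ) : ℂ := ∏ j ∈ Finset.range n, (1 - a * q ^ j)

/-- The infinite q-Pochhammer symbol `(a;q)_∞`. -/
noncomputable def qPochInf (a q : ℂ) : ℂ := ∏' j : ℕ, (1 - a * q ^ j)

/-!
Removing the overline from the largest part of every run of overlined parts preserves the size
and turns a lower `(k+1)`-run overpartition into a lower `k`-run one. For `k ≥ 1` no run vanishes,
so the overlined parts of the original are the remaining overlined parts together with their
successors, and the original is recovered: the map is injective.
-/

theorem Multiset.finite_setOf_forall_pos_sum_le (n : ℕ) :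
    {s : Multiset ℕ | (∀ x ∈ s, 0 < x) ∧ s.sum ≤ n}.Finite := by
  refine ((Set.finite_Iic n).biUnion fun m _ =>
    Set.finite_range (Nat.Partition.parts : m.Partition → Multiset ℕ)).subset ?_
  rintro s ⟨hpos, hsum⟩
  exact Set.mem_biUnion (x := s.sum) hsum ⟨⟨s, hpos _, rfl⟩, rfl⟩

theorem Finset.eq_union_image_succ_of_not_isolated {s : Finset ℕ} (h0 : 0 ∉ s)
    (hs : ∀ t, t + 1 ∈ s → t + 2 ∈ s ∨ t ∈ s) :
    s = s.filter (· + 1 ∈ s) ∪ (s.filter (· + 1 ∈ s)).image (· + 1) := by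
  ext m
  simp only [Finset.mem_union, Finset.mem_filter, Finset.mem_image]
  constructor
  · intro hm
    obtain _ | t := m
    · exact absurd hm h0
    · rcases hs t hm with hsucc | hpred
      · exact Or.inl ⟨hm, hsucc⟩
      · exact Or.inr ⟨t, ⟨hpred, hm⟩, rfl⟩
  · rintro (⟨hm, -⟩ | ⟨t, ⟨-, ht⟩, rfl⟩) <;> assumption

namespace Overpartition

theorem finite_setOf_size_eq (n : ℕ) : {μ : Overpartition | μ.size = n}.Finite := by
  have hinj : Function.Injective fun μ : Overpartition => (μ.parts, μ.overlined.val) := by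
    rintro ⟨p, o, _, _⟩ ⟨p', o', _, _⟩ h
    obtain ⟨rfl, ho⟩ := Prod.mk.inj h
    obtain rfl := Finset.val_injective ho
    rfl
  refine Set.Finite.of_finite_image ?_ hinj.injOn
  refine ((Multiset.finite_setOf_forall_pos_sum_le n).prod
    (Multiset.finite_setOf_forall_pos_sum_le n)).subset ?_
  rintro _ ⟨μ, rfl, rfl⟩
  exact ⟨⟨μ.parts_pos, Nat.le_add_right _ _⟩, ⟨μ.over_pos, by simp [size]⟩⟩

def dropRunTops (μ : Overpartition) : Overpartition where
  parts := μ.parts + (μ.overlined.filter (· + 1 ∉ μ.overlined)).val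
  overlined := μ.overlined.filter (· + 1 ∈ μ.overlined)
  parts_pos p hp := (Multiset.mem_add.1 hp).elim (μ.parts_pos p)
    fun h => μ.over_pos p (Finset.mem_of_mem_filter p h)
  over_pos p hp := μ.over_pos p (Finset.mem_of_mem_filter p hp)

variable {μ : Overpartition}

theorem mem_overlined_dropRunTops {m : ℕ} :
    m ∈ μ.dropRunTops.overlined ↔ m ∈ μ.overlined ∧ m + 1 ∈ μ.overlined :=
  Finset.mem_filter

theorem mem_parts_dropRunTops {m : ℕ} :
    m ∈ μ.dropRunTops.parts ↔ m ∈ μ.parts ∨ m ∈ μ.overlined ∧ m + 1 ∉ μ.overlined := by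
  simp [dropRunTops]

theorem size_dropRunTops (μ : Overpartition) : μ.dropRunTops.size = μ.size := by
  have hsplit := Finset.sum_filter_add_sum_filter_not μ.overlined (· + 1 ∈ μ.overlined) id
  simp only [size, dropRunTops, Multiset.sum_add, Finset.sum_val, id] at hsplit ⊢
  omega

theorem dropRunTops_injOn :
    Set.InjOn dropRunTops
      {μ | ∀ t, t + 1 ∈ μ.overlined → t + 2 ∈ μ.overlined ∨ t ∈ μ.overlined} := by
  intro μ hμ ν hν h
  have hover : μ.overlined = ν.overlined := by
    rw [Finset.eq_union_image_succ_of_not_isolated (fun h0 => (μ.over_pos 0 h0).false) hμ,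
      Finset.eq_union_image_succ_of_not_isolated (fun h0 => (ν.over_pos 0 h0).false) hν]
    exact congrArg (fun s => s ∪ s.image (· + 1)) (congrArg overlined h)
  have hparts : μ.parts = ν.parts := by
    have h' := congrArg parts h
    simp only [dropRunTops, hover] at h'
    exact add_right_cancel h'
  cases μ; cases ν
  simp_all

end Overpartition

section LowerKRun

variable {k : ℕ} {μ : Overpartition}

theorem IsLowerKRun.not_isolated (hk : 2 ≤ k) (h : IsLowerKRun k μ) {t : ℕ}
    (ht : t + 1 ∈ μ.overlined) : t + 2 ∈ μ.overlined ∨ t ∈ μ.overlined := by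
  obtain ⟨j, hj, hj', hrun, -⟩ := h _ ht
  by_cases hlt : t + 1 < j + k
  · exact Or.inl (hrun _ (by omega) (by omega))
  · exact Or.inr (hrun _ (by omega) (by omega))

theorem IsLowerKRun.dropRunTops (h : IsLowerKRun (k + 1) μ) : IsLowerKRun k μ.dropRunTops := by
  intro m hm
  obtain ⟨hm, hm_succ⟩ := Overpartition.mem_overlined_dropRunTops.1 hm
  obtain ⟨j, hj, hj', hrun, hj_parts, hj_over, hj_top⟩ := h m hm
  refine ⟨j, hj, ?_, fun i hi hi' => ?_, ?_, ?_, ?_⟩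
  · by_contra! hlt
    exact hj_top (by rwa [show j + (k + 1) + 1 = m + 1 by omega])
  · exact Overpartition.mem_overlined_dropRunTops.2
      ⟨hrun i hi (by omega), hrun (i + 1) (by omega) (by omega)⟩
  · rw [Overpartition.mem_parts_dropRunTops]
    exact fun hc => hc.elim hj_parts fun hc => hj_over hc.1
  · exact fun hc => hj_over (Overpartition.mem_overlined_dropRunTops.1 hc).1
  · exact fun hc => hj_top (Overpartition.mem_overlined_dropRunTops.1 hc).2

end LowerKRun

/-- p̄ₖ(n) ≥ p̄_{k+1}(n) for all n ≥ 0 and k ≥ 1. -/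
theorem lowerKRunCount_anti (n k : ℕ) (hk : 1 ≤ k) :
    lowerKRunCount (k + 1) n ≤ lowerKRunCount k n := by
  have : Finite {μ : Overpartition // μ.size = n ∧ IsLowerKRun k μ} :=
    ((Overpartition.finite_setOf_size_eq n).subset fun _ h => h.1).to_subtype
  refine Nat.card_le_card_of_injective
    (fun μ => ⟨μ.1.dropRunTops, μ.1.size_dropRunTops.trans μ.2.1, μ.2.2.dropRunTops⟩) ?_
  rintro ⟨μ, _, hμ⟩ ⟨ν, _, hν⟩ h
  exact Subtype.ext <| Overpartition.dropRunTops_injOn (fun _ => hμ.not_isolated (by omega))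
    (fun _ => hν.not_isolated (by omega)) (congrArg Subtype.val h)
end

section
/- Define A_{r,s}(q) := (−1)^s q^{k(k+1)(r+s)²/2 + (k+1)s(s+1)/2} / ((q^k;q^k)_r (q^{k+1};q^{k+1})_s) and λ̃_m := Σ_{kr+(k+1)s = m, r,s ≥ 0} A_{r,s}. Then (1−q^m) λ̃_m = q^{m(k+1) − k(k+1)/2} (λ̃_{m−k} − λ̃_{m−k−1}) for all m ≥ 1. -/
open scoped BigOperators
open Real

/-- The summand A_{r,s}(q). -/
noncomputable def Atil (k : ℕ) (q : ℂ) (r s : ℕ) : ℂ :=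
  (-1) ^ s * q ^ (k * (k + 1) * (r + s) ^ 2 / 2 + (k + 1) * s * (s + 1) / 2) /
    (qPoch (q ^ k) (q ^ k) r * qPoch (q ^ (k + 1)) (q ^ (k + 1)) s)

/-- λ̃ₘ = Σ_{kr+(k+1)s=m} A_{r,s}, with λ̃ⱼ = 0 for j < 0. -/
noncomputable def lamTil (k : ℕ) (q : ℂ) (m : ℤ) : ℂ :=
  if m < 0 then 0
  else
    ∑ p ∈ (Finset.range (m.toNat + 1) ×ˢ Finset.range (m.toNat + 1)).filter
        (fun p => k * p.1 + (k + 1) * p.2 = m.toNat), Atil k q p.1 p.2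

/-!
On a term `A_{r,s}` with `k r + (k + 1) s = m` split
`1 - q^m = q^{(k+1)s} (1 - q^{kr}) - (q^{(k+1)s} - 1)`. The factor `1 - q^{kr}` cancels the last
factor of `(q^k;q^k)_r` and `q^{(k+1)s} - 1` that of `(q^{k+1};q^{k+1})_s`; the exponents then
differ by exactly `m(k+1) - k(k+1)/2`, so the two pieces become `q^{m(k+1)-k(k+1)/2} A_{r-1,s}` and
`q^{m(k+1)-k(k+1)/2} A_{r,s-1}`. Summing over the fibre `k r + (k + 1) s = m` and shifting `r` resp.
`s` down by one turns them into `λ̃_{m-k}` and `λ̃_{m-k-1}`.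
-/

def weightFiber (a b n : ℕ) : Finset (ℕ × ℕ) :=
  (Finset.range (n + 1) ×ˢ Finset.range (n + 1)).filter (fun p => a * p.1 + b * p.2 = n)

noncomputable def weightFiberSum {M : Type*} [AddCommMonoid M] (a b : ℕ) (F : ℕ → ℕ → M)
    (n : ℤ) : M :=
  if n < 0 then 0 else ∑ p ∈ weightFiber a b n.toNat, F p.1 p.2

lemma lamTil_eq_weightFiberSum (k : ℕ) (q : ℂ) :
    lamTil k q = weightFiberSum k (k + 1) (Atil k q) := rfl

section WeightFiber

variable {a b n : ℕ}

lemma mem_weightFiber (ha : 1 ≤ a) (hb : 1 ≤ b) {r s : ℕ} :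
    (r, s) ∈ weightFiber a b n ↔ a * r + b * s = n := by
  refine ⟨fun h => (Finset.mem_filter.1 h).2, fun h => ?_⟩
  have h1 : r ≤ a * r := Nat.le_mul_of_pos_left _ ha
  have h2 : s ≤ b * s := Nat.le_mul_of_pos_left _ hb
  simp only [weightFiber, Finset.mem_filter, Finset.mem_product, Finset.mem_range]
  omega

lemma weightFiber_swap :
    weightFiber b a n = (weightFiber a b n).map (Equiv.prodComm ℕ ℕ).toEmbedding := by
  ext ⟨r, s⟩
  simp [weightFiber, add_comm, and_comm]

lemma weightFiberSum_sub {M : Type*} [AddCommGroup M] (F G : ℕ → ℕ → M) (m : ℤ) :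
    weightFiberSum a b (fun r s => F r s - G r s) m =
      weightFiberSum a b F m - weightFiberSum a b G m := by
  unfold weightFiberSum
  split_ifs
  · exact (sub_zero 0).symm
  · exact Finset.sum_sub_distrib ..

lemma mul_weightFiberSum {R : Type*} [NonUnitalNonAssocSemiring R] (c : R) (F : ℕ → ℕ → R)
    (m : ℤ) : c * weightFiberSum a b F m = weightFiberSum a b (fun r s => c * F r s) m := by
  unfold weightFiberSum
  split_ifs
  · exact mul_zero c
  · exact Finset.mul_sum ..

variable {M : Type*} [AddCommMonoid M] {F G : ℕ → ℕ → M}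

lemma weightFiberSum_of_neg {m : ℤ} (hm : m < 0) : weightFiberSum a b F m = 0 := if_pos hm

lemma weightFiberSum_natCast :
    weightFiberSum a b F n = ∑ p ∈ weightFiber a b n, F p.1 p.2 := by
  simp [weightFiberSum]

lemma weightFiberSum_swap (m : ℤ) :
    weightFiberSum a b F m = weightFiberSum b a (fun r s => F s r) m := by
  unfold weightFiberSum
  split_ifs
  · rfl
  · rw [weightFiber_swap, Finset.sum_map]
    rfl

lemma weightFiberSum_congr {m : ℤ}
    (h : ∀ r s : ℕ, (a * r + b * s : ℤ) = m → F r s = G r s) :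
    weightFiberSum a b F m = weightFiberSum a b G m := by
  unfold weightFiberSum
  split_ifs with hm
  · rfl
  · refine Finset.sum_congr rfl fun p hp => h _ _ ?_
    have := (Finset.mem_filter.1 hp).2
    omega

lemma weightFiberSum_shift_left (ha : 1 ≤ a) (hb : 1 ≤ b) (hF : ∀ s, F 0 s = 0) (m : ℤ) :
    weightFiberSum a b F m = weightFiberSum a b (fun r s => F (r + 1) s) (m - a) := by
  rcases lt_or_ge m a with hm | hm
  · rw [weightFiberSum_of_neg (m := m - a) (by omega)]
    unfold weightFiberSum
    split_ifs
    · rfl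
    refine Finset.sum_eq_zero ?_
    rintro ⟨r, s⟩ hp
    obtain rfl : r = 0 := by
      by_contra hr
      have := (mem_weightFiber ha hb).1 hp
      have : a ≤ a * r := Nat.le_mul_of_pos_right _ (Nat.pos_of_ne_zero hr)
      omega
    exact hF s
  obtain ⟨N, rfl⟩ : ∃ N : ℕ, m = N + a := ⟨(m - a).toNat, by omega⟩
  rw [add_sub_cancel_right, ← Nat.cast_add, weightFiberSum_natCast, weightFiberSum_natCast]
  symm
  refine Finset.sum_bij_ne_zero (fun p _ _ => (p.1 + 1, p.2)) ?_ ?_ ?_ (fun _ _ _ => rfl)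
  · rintro ⟨r, s⟩ hp _
    rw [mem_weightFiber ha hb] at hp ⊢
    linear_combination hp
  · rintro ⟨r, s⟩ _ _ ⟨r', s'⟩ _ _ h
    simpa using h
  · rintro ⟨r, s⟩ hp hF0
    obtain ⟨r, rfl⟩ :=
      Nat.exists_eq_add_one_of_ne_zero fun hr : r = 0 => hF0 (by subst hr; exact hF s)
    refine ⟨(r, s), ?_, hF0, rfl⟩
    rw [mem_weightFiber ha hb] at hp ⊢
    linear_combination hp

lemma weightFiberSum_shift_right (ha : 1 ≤ a) (hb : 1 ≤ b) (hF : ∀ r, F r 0 = 0) (m : ℤ) :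
    weightFiberSum a b F m = weightFiberSum a b (fun r s => F r (s + 1)) (m - b) := by
  rw [weightFiberSum_swap, weightFiberSum_shift_left hb ha hF, weightFiberSum_swap]

end WeightFiber

lemma one_sub_pow_ne_zero_of_norm_lt_one {𝕜 : Type*} [NormedDivisionRing 𝕜] {q : 𝕜}
    (hq : ‖q‖ < 1) {n : ℕ} (hn : n ≠ 0) : 1 - q ^ n ≠ 0 := by
  rw [sub_ne_zero]
  intro h
  have : ‖q ^ n‖ < 1 := by rw [norm_pow]; exact pow_lt_one₀ (norm_nonneg q) hq hn
  simp [← h] at this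

lemma qPoch_pow_succ (q : ℂ) (t n : ℕ) :
    qPoch (q ^ t) (q ^ t) (n + 1) = qPoch (q ^ t) (q ^ t) n * (1 - q ^ (t * (n + 1))) := by
  rw [qPoch, Finset.prod_range_succ, ← pow_mul, ← pow_add, mul_add_one, add_comm t]
  rfl

def atilExponent (k r s : ℕ) : ℕ := k * (k + 1) * (r + s) ^ 2 / 2 + (k + 1) * s * (s + 1) / 2

lemma Atil_eq (k : ℕ) (q : ℂ) (r s : ℕ) :
    Atil k q r s = (-1) ^ s * q ^ atilExponent k r s /
      (qPoch (q ^ k) (q ^ k) r * qPoch (q ^ (k + 1)) (q ^ (k + 1)) s) := rfl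

lemma two_mul_div_two_mul_succ (k : ℕ) : 2 * (k * (k + 1) / 2) = k * (k + 1) :=
  Nat.two_mul_div_two_of_even (Nat.even_mul_succ_self k)

lemma two_mul_atilExponent (k r s : ℕ) :
    2 * atilExponent k r s = k * (k + 1) * (r + s) ^ 2 + (k + 1) * s * (s + 1) := by
  have hr : 2 * (k * (k + 1) * (r + s) ^ 2 / 2) = k * (k + 1) * (r + s) ^ 2 :=
    Nat.two_mul_div_two_of_even ((Nat.even_mul_succ_self k).mul_right _)
  have hs : 2 * ((k + 1) * s * (s + 1) / 2) = (k + 1) * s * (s + 1) := by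
    rw [mul_assoc]
    exact Nat.two_mul_div_two_of_even ((Nat.even_mul_succ_self s).mul_left _)
  rw [atilExponent, mul_add, hr, hs]

lemma atilExponent_succ_left (k r s : ℕ) :
    (k + 1) * s + atilExponent k (r + 1) s =
      (k + 1) * (k * r + (k + 1) * s) + k * (k + 1) / 2 + atilExponent k r s := by
  linarith [two_mul_atilExponent k (r + 1) s, two_mul_atilExponent k r s,
    two_mul_div_two_mul_succ k]

lemma atilExponent_succ_right (k r s : ℕ) :
    atilExponent k r (s + 1) =
      (k + 1) * (k * r + (k + 1) * s + 1) + k * (k + 1) / 2 + atilExponent k r s := by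
  linarith [two_mul_atilExponent k r (s + 1), two_mul_atilExponent k r s,
    two_mul_div_two_mul_succ k]

lemma recurrence_exponent_eq (k n : ℕ) :
    ((n + k : ℕ) : ℤ) * (k + 1) - k * (k + 1) / 2 = ((k + 1) * n + k * (k + 1) / 2 : ℕ) := by
  have h := two_mul_div_two_mul_succ k
  zify at h
  push_cast
  linear_combination (-1 : ℤ) * h

section AtilShift

variable {k : ℕ} {q : ℂ}

lemma Atil_succ_left (hk : 1 ≤ k) (hq : ‖q‖ < 1) (r s : ℕ) :
    q ^ ((k + 1) * s) * (1 - q ^ (k * (r + 1))) * Atil k q (r + 1) s =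
      q ^ ((k + 1) * (k * r + (k + 1) * s) + k * (k + 1) / 2) * Atil k q r s := by
  have hD : 1 - q ^ (k * (r + 1)) ≠ 0 :=
    one_sub_pow_ne_zero_of_norm_lt_one hq (by positivity)
  have hcancel : (1 - q ^ (k * (r + 1))) * Atil k q (r + 1) s = (-1) ^ s *
      q ^ atilExponent k (r + 1) s /
        (qPoch (q ^ k) (q ^ k) r * qPoch (q ^ (k + 1)) (q ^ (k + 1)) s) := by
    rw [Atil_eq, qPoch_pow_succ, mul_right_comm _ (1 - _), mul_div_assoc', mul_comm (1 - _),
      mul_div_mul_right _ _ hD]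
  have hexp : q ^ ((k + 1) * s) * q ^ atilExponent k (r + 1) s =
      q ^ ((k + 1) * (k * r + (k + 1) * s) + k * (k + 1) / 2) * q ^ atilExponent k r s := by
    rw [← pow_add, ← pow_add, atilExponent_succ_left]
  rw [mul_assoc, hcancel, Atil_eq]
  linear_combination
    (-1) ^ s / (qPoch (q ^ k) (q ^ k) r * qPoch (q ^ (k + 1)) (q ^ (k + 1)) s) * hexp

lemma Atil_succ_right (hq : ‖q‖ < 1) (r s : ℕ) :
    (q ^ ((k + 1) * (s + 1)) - 1) * Atil k q r (s + 1) =
      q ^ ((k + 1) * (k * r + (k + 1) * s + 1) + k * (k + 1) / 2) * Atil k q r s := by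
  have hD : 1 - q ^ ((k + 1) * (s + 1)) ≠ 0 :=
    one_sub_pow_ne_zero_of_norm_lt_one hq (by positivity)
  have hcancel : (1 - q ^ ((k + 1) * (s + 1))) * Atil k q r (s + 1) = (-1) ^ (s + 1) *
      q ^ atilExponent k r (s + 1) /
        (qPoch (q ^ k) (q ^ k) r * qPoch (q ^ (k + 1)) (q ^ (k + 1)) s) := by
    rw [Atil_eq, qPoch_pow_succ, ← mul_assoc, mul_div_assoc', mul_comm (1 - _),
      mul_div_mul_right _ _ hD]
  rw [← neg_sub, neg_mul, hcancel, Atil_eq, atilExponent_succ_right, pow_add q, pow_succ]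
  ring

lemma weightFiberSum_Atil_succ_left (hk : 1 ≤ k) (hq : ‖q‖ < 1) (m : ℕ) :
    weightFiberSum k (k + 1) (fun r s => q ^ ((k + 1) * s) * (1 - q ^ (k * (r + 1))) *
      Atil k q (r + 1) s) (m - k) =
      q ^ ((m : ℤ) * (k + 1) - k * (k + 1) / 2) * lamTil k q (m - k) := by
  rw [lamTil_eq_weightFiberSum, mul_weightFiberSum]
  refine weightFiberSum_congr fun r s hrs => ?_
  obtain rfl : m = (k * r + (k + 1) * s) + k := by zify at hrs ⊢; linarith
  rw [Atil_succ_left hk hq, recurrence_exponent_eq, zpow_natCast]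

lemma weightFiberSum_Atil_succ_right (hq : ‖q‖ < 1) (m : ℕ) :
    weightFiberSum k (k + 1) (fun r s => (q ^ ((k + 1) * (s + 1)) - 1) * Atil k q r (s + 1))
      (m - (k + 1 : ℕ)) =
      q ^ ((m : ℤ) * (k + 1) - k * (k + 1) / 2) * lamTil k q (m - k - 1) := by
  rw [lamTil_eq_weightFiberSum, mul_weightFiberSum, Nat.cast_succ, ← sub_sub]
  refine weightFiberSum_congr fun r s hrs => ?_
  obtain rfl : m = (k * r + (k + 1) * s + 1) + k := by zify at hrs ⊢; linarith
  rw [Atil_succ_right hq, recurrence_exponent_eq, zpow_natCast]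

end AtilShift

theorem lamTil_recurrence_general (k : ℕ) (hk : 1 ≤ k) (q : ℂ) (hq : ‖q‖ < 1) (m : ℕ) :
    (1 - q ^ m) * lamTil k q m =
      q ^ ((m : ℤ) * (k + 1) - k * (k + 1) / 2) *
        (lamTil k q ((m : ℤ) - k) - lamTil k q ((m : ℤ) - k - 1)) := by
  have hsplit : (1 - q ^ m) * lamTil k q m =
      weightFiberSum k (k + 1)
          (fun r s => q ^ ((k + 1) * s) * (1 - q ^ (k * r)) * Atil k q r s) m -
        weightFiberSum k (k + 1) (fun r s => (q ^ ((k + 1) * s) - 1) * Atil k q r s) m := by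
    rw [← weightFiberSum_sub, lamTil_eq_weightFiberSum, mul_weightFiberSum]
    refine weightFiberSum_congr fun r s hrs => ?_
    obtain rfl : m = k * r + (k + 1) * s := by exact_mod_cast hrs.symm
    rw [pow_add]
    ring
  rw [hsplit, mul_sub, ← weightFiberSum_Atil_succ_left hk hq,
    ← weightFiberSum_Atil_succ_right hq]
  congr 1
  · exact weightFiberSum_shift_left hk (Nat.le_add_left 1 k) (by simp) _
  · exact weightFiberSum_shift_right hk (Nat.le_add_left 1 k) (by simp) _

/-- (1−qᵐ) λ̃ₘ = q^{m(k+1) − k(k+1)/2} (λ̃_{m−k} − λ̃_{m−k−1}) for all m ≥ 1. -/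
theorem lamTil_recurrence (k : ℕ) (hk : 1 ≤ k) (q : ℂ) (hq : ‖q‖ < 1) (m : ℕ) (hm : 1 ≤ m) :
    (1 - q ^ m) * lamTil k q m =
      q ^ ((m : ℤ) * (k + 1) - k * (k + 1) / 2) *
        (lamTil k q ((m : ℤ) - k) - lamTil k q ((m : ℤ) - k - 1)) :=
  lamTil_recurrence_general k hk q hq m
end

section
/- Lower 1-run overpartitions of n are in bijection (via Ferrers diagram conjugation) with overpartitions of n in which every overlined part size m that is not the largest part also occurs non-overlined; in particular the two classes are equinumerous for every n. -/
open scoped BigOperators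
open Real

/-- Overpartitions in which every overlined part size that is not the largest part
also occurs non-overlined. -/
def ConjClass (μ : Overpartition) : Prop :=
  ∀ m ∈ μ.overlined, m ∈ μ.parts ∨ ((∀ p ∈ μ.parts, p ≤ m) ∧ ∀ p ∈ μ.overlined, p ≤ m)

/-!
Encode a partition by the multiset `l` of its parts. Column `j` of its Ferrers diagram has length
`l.countGe j`, the number of parts `≥ j`; these column lengths are the parts of the conjugate,
and conjugation is an involution by the Galois connection
`j ≤ (conjugate l).countGe i ↔ i ≤ l.countGe j`.

The part `l.countGe m` occurs in the conjugate once for each column of that length. If `m` is a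
part, column `m + 1` is strictly shorter than column `m`, so `l.countGe m` is a repeated part of the
conjugate exactly when `m ≥ 2` and `m - 1` is not a part; for `m = 1` it is the largest part of the
conjugate. Thus for an overlined part `m`, "`m - 1` is not a part" (the lower 1-run condition)
becomes "the conjugate overlined part also occurs non-overlined or is the largest part".
-/

namespace Multiset

def countGe (l : Multiset ℕ) (j : ℕ) : ℕ := card (l.filter (j ≤ ·))

/-- The multiset of nonzero column lengths: `l.sum` bounds every part, hence every index of a
nonempty column. -/
def conjugate (l : Multiset ℕ) : Multiset ℕ :=
  ((Finset.Icc 1 l.sum).val.map l.countGe).filter (0 < ·)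

variable {l : Multiset ℕ} {i j m : ℕ}

theorem countGe_cons (a : ℕ) (l : Multiset ℕ) (j : ℕ) :
    (a ::ₘ l).countGe j = l.countGe j + if j ≤ a then 1 else 0 := by
  simp only [countGe, filter_cons]
  split_ifs <;> simp [add_comm]

theorem countGe_antitone (l : Multiset ℕ) : Antitone l.countGe := fun _ _ hjk =>
  card_le_card (monotone_filter_right l fun _ h => hjk.trans h)

theorem countGe_pos_iff : 0 < l.countGe j ↔ ∃ a ∈ l, j ≤ a := by
  simp [countGe, card_pos_iff_exists_mem]

theorem countGe_eq_countGe_succ_add_count (l : Multiset ℕ) (j : ℕ) :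
    l.countGe j = l.countGe (j + 1) + l.count j := by
  induction l using Multiset.induction with
  | empty => simp [countGe]
  | cons a s ih => simp only [countGe_cons, count_cons]; split_ifs <;> omega

theorem count_eq_countGe_sub (l : Multiset ℕ) (j : ℕ) :
    l.count j = l.countGe j - l.countGe (j + 1) := by
  have := countGe_eq_countGe_succ_add_count l j
  omega

theorem countGe_succ_lt_of_mem (hm : m ∈ l) : l.countGe (m + 1) < l.countGe m := by
  have := countGe_eq_countGe_succ_add_count l m
  have := count_pos.mpr hm
  omega

theorem countGe_pos_of_mem (hm : m ∈ l) : 0 < l.countGe m :=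
  countGe_pos_iff.mpr ⟨m, hm, le_rfl⟩

theorem countGe_succ_eq_of_notMem (hj : j ∉ l) : l.countGe (j + 1) = l.countGe j := by
  have := countGe_eq_countGe_succ_add_count l j
  rw [count_eq_zero_of_notMem hj] at this
  omega

theorem forall_mem_le_iff_countGe_eq_zero {k : ℕ} :
    (∀ a ∈ l, a ≤ k) ↔ l.countGe (k + 1) = 0 := by
  rw [← Nat.le_zero, ← not_lt, countGe_pos_iff]
  simp only [not_exists, not_and, not_le, Nat.lt_succ_iff]

theorem sum_countGe {K : ℕ} (hK : ∀ a ∈ l, a ≤ K) :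
    ∑ j ∈ Finset.Icc 1 K, l.countGe j = l.sum := by
  induction l using Multiset.induction with
  | empty => simp [countGe]
  | cons a s ih =>
    have hIcc : (Finset.Icc 1 K).filter (· ≤ a) = Finset.Icc 1 a := by
      ext j
      simp only [Finset.mem_filter, Finset.mem_Icc]
      have := hK a (mem_cons_self a s)
      omega
    simp only [countGe_cons, Finset.sum_add_distrib, Finset.sum_boole, hIcc, Nat.card_Icc,
      ih fun x hx => hK x (mem_cons_of_mem hx), sum_cons, Nat.cast_id]
    omega

theorem sum_conjugate (l : Multiset ℕ) : l.conjugate.sum = l.sum := by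
  have hzero : (((Finset.Icc 1 l.sum).val.map l.countGe).filter (¬0 < ·)).sum = 0 :=
    sum_eq_zero fun x hx => Nat.eq_zero_of_not_pos (mem_filter.mp hx).2
  have hsplit := sum_filter_add_sum_filter_not (s := (Finset.Icc 1 l.sum).val.map l.countGe)
    (0 < ·)
  rw [hzero, add_zero, ← Finset.sum_eq_multiset_sum,
    sum_countGe fun _ h => le_sum_of_mem h] at hsplit
  exact hsplit

theorem pos_of_mem_conjugate {x : ℕ} (hx : x ∈ l.conjugate) : 0 < x :=
  (mem_filter.mp hx).2

theorem countGe_mem_conjugate (hj : j ∈ Finset.Icc 1 l.sum) (hpos : 0 < l.countGe j) :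
    l.countGe j ∈ l.conjugate :=
  mem_filter.mpr ⟨mem_map_of_mem _ hj, hpos⟩

theorem count_conjugate (hm : 0 < m) :
    l.conjugate.count m = ((Finset.Icc 1 l.sum).filter (m = l.countGe ·)).card := by
  rw [conjugate, count_filter, if_pos hm, count_map, Finset.card_def, Finset.filter_val]

theorem countGe_conjugate (hi : 1 ≤ i) :
    l.conjugate.countGe i = ((Finset.Icc 1 l.sum).filter (i ≤ l.countGe ·)).card := by
  rw [countGe, conjugate, filter_filter, Finset.card_def, Finset.filter_val,
    filter_congr fun a _ => and_iff_left_of_imp (lt_of_lt_of_le hi),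
    ← countP_eq_card_filter, countP_map]

theorem le_countGe_conjugate_iff (hi : 1 ≤ i) (hj : 1 ≤ j) :
    j ≤ l.conjugate.countGe i ↔ i ≤ l.countGe j := by
  rw [countGe_conjugate hi]
  constructor
  · intro h
    by_contra! hlt
    have hsub : (Finset.Icc 1 l.sum).filter (i ≤ l.countGe ·) ⊆ Finset.Icc 1 (j - 1) := by
      intro t ht
      simp only [Finset.mem_filter, Finset.mem_Icc] at ht ⊢
      refine ⟨ht.1.1, ?_⟩
      by_contra! hjt
      have := countGe_antitone l (show j ≤ t by omega)
      omega
    have := Finset.card_le_card hsub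
    rw [Nat.card_Icc] at this
    omega
  · intro h
    obtain ⟨a, ha, hja⟩ := countGe_pos_iff.mp (show 0 < l.countGe j by omega)
    have hsub : Finset.Icc 1 j ⊆ (Finset.Icc 1 l.sum).filter (i ≤ l.countGe ·) := by
      intro t ht
      rw [Finset.mem_Icc] at ht
      simp only [Finset.mem_filter, Finset.mem_Icc]
      exact ⟨⟨ht.1, ht.2.trans (hja.trans (le_sum_of_mem ha))⟩,
        h.trans (countGe_antitone l ht.2)⟩
    have := Finset.card_le_card hsub
    rw [Nat.card_Icc] at this
    omega

theorem countGe_conjugate_conjugate (hj : 1 ≤ j) :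
    l.conjugate.conjugate.countGe j = l.countGe j := by
  refine eq_of_forall_le_iff fun c => ?_
  rcases Nat.eq_zero_or_pos c with rfl | hc
  · simp
  · rw [le_countGe_conjugate_iff hj hc, le_countGe_conjugate_iff hc hj]

theorem conjugate_conjugate (hl : ∀ a ∈ l, 0 < a) : l.conjugate.conjugate = l := by
  ext m
  rcases Nat.eq_zero_or_pos m with rfl | hm
  · rw [count_eq_zero_of_notMem fun h => (pos_of_mem_conjugate h).false,
      count_eq_zero_of_notMem fun h => (hl 0 h).false]
  · rw [count_eq_countGe_sub, count_eq_countGe_sub, countGe_conjugate_conjugate hm,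
      countGe_conjugate_conjugate (Nat.le_succ_of_le hm)]

theorem countGe_conjugate_countGe (hm : m ∈ l) : l.conjugate.countGe (l.countGe m) = m := by
  refine eq_of_forall_le_iff fun c => ?_
  rcases Nat.eq_zero_or_pos c with rfl | hc
  · simp
  rw [le_countGe_conjugate_iff (countGe_pos_of_mem hm) hc]
  constructor
  · intro h
    by_contra! hmc
    have := countGe_antitone l (show m + 1 ≤ c by omega)
    have := countGe_succ_lt_of_mem hm
    omega
  · exact fun h => countGe_antitone l h

theorem one_lt_count_conjugate_countGe_iff (hm : m ∈ l) :
    1 < l.conjugate.count (l.countGe m) ↔ 2 ≤ m ∧ m - 1 ∉ l := by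
  have hsum : m ≤ l.sum := le_sum_of_mem hm
  rw [count_conjugate (countGe_pos_of_mem hm), Finset.one_lt_card]
  constructor
  · rintro ⟨a, ha, b, hb, hab⟩
    obtain ⟨j, hj, hjm⟩ :
        ∃ j ∈ (Finset.Icc 1 l.sum).filter (l.countGe m = l.countGe ·), j ≠ m :=
      if ham : a = m then ⟨b, hb, ham ▸ hab.symm⟩ else ⟨a, ha, ham⟩
    simp only [Finset.mem_filter, Finset.mem_Icc] at hj
    obtain ⟨⟨hj1, -⟩, hcol⟩ := hj
    have hlt := countGe_succ_lt_of_mem hm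
    have hjlt : j < m := by
      by_contra! hmj
      have := countGe_antitone l (show m + 1 ≤ j by omega)
      omega
    refine ⟨by omega, fun hpred => ?_⟩
    have h1 := countGe_antitone l (show j ≤ m - 1 by omega)
    have h2 := countGe_succ_lt_of_mem hpred
    rw [Nat.sub_add_cancel (by omega)] at h2
    omega
  · rintro ⟨hm2, hpred⟩
    have hcol := countGe_succ_eq_of_notMem hpred
    rw [Nat.sub_add_cancel (by omega)] at hcol
    refine ⟨m - 1, ?_, m, ?_, by omega⟩ <;> simp only [Finset.mem_filter, Finset.mem_Icc]
    · exact ⟨⟨by omega, by omega⟩, hcol⟩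
    · exact ⟨⟨by omega, hsum⟩, trivial⟩

theorem forall_mem_conjugate_le_iff {k : ℕ} :
    (∀ p ∈ l.conjugate, p ≤ k) ↔ l.countGe 1 ≤ k := by
  rw [forall_mem_le_iff_countGe_eq_zero, ← not_lt, Nat.lt_iff_add_one_le,
    ← le_countGe_conjugate_iff (Nat.le_add_left 1 k) le_rfl]
  omega

theorem pred_notMem_iff (hl : ∀ a ∈ l, 0 < a) (hm : m ∈ l) :
    m - 1 ∉ l ↔ 1 < l.conjugate.count (l.countGe m) ∨ l.countGe 1 ≤ l.countGe m := by
  rw [one_lt_count_conjugate_countGe_iff hm]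
  have hm1 := hl m hm
  constructor
  · intro hpred
    rcases Nat.lt_or_ge 1 m with hm2 | hm2
    · exact Or.inl ⟨hm2, hpred⟩
    · exact Or.inr (countGe_antitone l hm2)
  · rintro (⟨-, hpred⟩ | hle) hpred'
    · exact hpred hpred'
    · have hlt := countGe_succ_lt_of_mem hpred'
      rw [Nat.sub_add_cancel hm1] at hlt
      have := countGe_antitone l (show 1 ≤ m - 1 from hl _ hpred')
      omega

end Multiset

namespace Overpartition

open Multiset

def allParts (μ : Overpartition) : Multiset ℕ := μ.parts + μ.overlined.val

theorem ext {μ ν : Overpartition} (hp : μ.parts = ν.parts) (ho : μ.overlined = ν.overlined) :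
    μ = ν := by
  cases μ; cases ν; cases hp; cases ho; rfl

theorem allParts_pos (μ : Overpartition) : ∀ a ∈ μ.allParts, 0 < a := by
  simp only [allParts, mem_add, Finset.mem_val]
  rintro a (ha | ha)
  exacts [μ.parts_pos a ha, μ.over_pos a ha]

theorem mem_allParts_of_mem_overlined {μ : Overpartition} {m : ℕ} (hm : m ∈ μ.overlined) :
    m ∈ μ.allParts :=
  mem_add.mpr (Or.inr hm)

theorem size_eq_sum_allParts (μ : Overpartition) : μ.size = μ.allParts.sum := by
  rw [size, allParts, sum_add, Finset.sum_eq_multiset_sum, map_id']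

theorem image_countGe_le_conjugate (μ : Overpartition) :
    (μ.overlined.image μ.allParts.countGe).val ≤ μ.allParts.conjugate := by
  rw [le_iff_subset (Finset.nodup _)]
  intro t ht
  obtain ⟨m, hm, rfl⟩ := Finset.mem_image.mp ht
  have hmem := mem_allParts_of_mem_overlined hm
  exact countGe_mem_conjugate (Finset.mem_Icc.mpr ⟨μ.over_pos m hm, le_sum_of_mem hmem⟩)
    (countGe_pos_of_mem hmem)

/-- Conjugation of the Ferrers diagram: the corner of an overlined part `m` is the bottom cell of
column `m`, which becomes the last cell of the part `countGe m` of the conjugate. -/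
def conj (μ : Overpartition) : Overpartition where
  parts := μ.allParts.conjugate - (μ.overlined.image μ.allParts.countGe).val
  overlined := μ.overlined.image μ.allParts.countGe
  parts_pos _ hp := pos_of_mem_conjugate (mem_of_le tsub_le_self hp)
  over_pos _ hp := by
    obtain ⟨m, hm, rfl⟩ := Finset.mem_image.mp hp
    exact countGe_pos_of_mem (mem_allParts_of_mem_overlined hm)

theorem allParts_conj (μ : Overpartition) : μ.conj.allParts = μ.allParts.conjugate :=
  tsub_add_cancel_of_le μ.image_countGe_le_conjugate

theorem size_conj (μ : Overpartition) : μ.conj.size = μ.size := by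
  rw [size_eq_sum_allParts, size_eq_sum_allParts, allParts_conj, sum_conjugate]

theorem overlined_conj_conj (μ : Overpartition) : μ.conj.conj.overlined = μ.overlined := by
  change (μ.overlined.image μ.allParts.countGe).image μ.conj.allParts.countGe = μ.overlined
  rw [allParts_conj, Finset.image_image]
  exact (Finset.image_congr fun m hm =>
    countGe_conjugate_countGe (mem_allParts_of_mem_overlined hm)).trans Finset.image_id

theorem conj_involutive : Function.Involutive conj := fun μ => by
  refine ext ?_ μ.overlined_conj_conj
  change μ.conj.allParts.conjugate - μ.conj.conj.overlined.val = μ.parts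
  rw [allParts_conj, conjugate_conjugate μ.allParts_pos, overlined_conj_conj, allParts,
    add_tsub_cancel_right]

theorem isLowerKRun_one_iff (μ : Overpartition) :
    IsLowerKRun 1 μ ↔ ∀ m ∈ μ.overlined, m - 1 ∉ μ.allParts := by
  simp only [allParts, mem_add, Finset.mem_val, not_or]
  constructor
  · intro h m hm
    obtain ⟨j, hj1, hj2, -, hparts, hover, -⟩ := h m hm
    obtain rfl : j = m - 1 := by omega
    exact ⟨hparts, hover⟩
  · intro h m hm
    have hm1 := μ.over_pos m hm
    refine ⟨m - 1, by omega, by omega, fun i hi1 hi2 => ?_, (h m hm).1, (h m hm).2,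
      fun hsucc => ?_⟩
    · obtain rfl : i = m := by omega
      exact hm
    · rw [show m - 1 + 1 + 1 = m + 1 by omega] at hsucc
      exact (h (m + 1) hsucc).2 hm

theorem conjClass_iff (μ : Overpartition) :
    ConjClass μ ↔
      ∀ m ∈ μ.overlined, 1 < μ.allParts.count m ∨ ∀ p ∈ μ.allParts, p ≤ m := by
  refine forall₂_congr fun m hm => or_congr ?_ ?_
  · rw [allParts, count_add, count_eq_one_of_mem μ.overlined.nodup hm, ← count_pos]
    omega
  · simp only [allParts, mem_add, Finset.mem_val, or_imp, forall_and]

theorem isLowerKRun_one_iff_conjClass_conj (μ : Overpartition) :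
    IsLowerKRun 1 μ ↔ ConjClass μ.conj := by
  rw [isLowerKRun_one_iff, conjClass_iff, allParts_conj]
  change _ ↔ ∀ t ∈ μ.overlined.image μ.allParts.countGe, _
  simp only [Finset.forall_mem_image, forall_mem_conjugate_le_iff]
  exact forall₂_congr fun m hm =>
    pred_notMem_iff μ.allParts_pos (mem_allParts_of_mem_overlined hm)

end Overpartition

/-- Lower 1-run overpartitions of n are in bijection with overpartitions of n in which every
overlined part size other than the largest part also occurs non-overlined; in particular the
two classes are equinumerous. -/
theorem lower_one_run_conj (n : ℕ) :
    Nonempty ({μ : Overpartition // μ.size = n ∧ IsLowerKRun 1 μ} ≃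
      {μ : Overpartition // μ.size = n ∧ ConjClass μ}) ∧
    Nat.card {μ : Overpartition // μ.size = n ∧ IsLowerKRun 1 μ} =
      Nat.card {μ : Overpartition // μ.size = n ∧ ConjClass μ} := by
  let e : {μ : Overpartition // μ.size = n ∧ IsLowerKRun 1 μ} ≃
      {μ : Overpartition // μ.size = n ∧ ConjClass μ} :=
    (Overpartition.conj_involutive.toPerm _).subtypeEquiv fun μ => by
      rw [Function.Involutive.coe_toPerm, Overpartition.size_conj,
        Overpartition.isLowerKRun_one_iff_conjClass_conj]
  exact ⟨⟨e⟩, Nat.card_congr e⟩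
end
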